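/- arXiv:cs/0412048 — 6 statements merged into one kernel-verified Lean document; each statement's English description precedes it below -/
import Mathlib

section
/- Given natural numbers n and l ≥ 1, the quantities p = ⌊n/l + (l-1)/2⌋ and q = ⌈n/l - (l-1)/2⌉ satisfy p - q ∈ {l-2, l-1} when l ≥ 2; more precisely, q = p - l + 1 if k = 0 and q = p - l + 2 if k > 0, where k = n - l(2p+1-l)/2. (The heights of the leftmost and rightmost columns of the staircase fixed point differ by l-1 or l-2 according to whether there are exceeding grains.) -/
/-- Height of the leftmost column: `p = ⌊n/l + (l-1)/2⌋`. -/
def pfloor (n l : ℕ) : ℤ := ⌊(n : ℚ) / l + (l : ℚ) / 2 - 1 / 2⌋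

/-- Height of the rightmost column: `q = ⌈n/l - (l-1)/2⌉`. -/
def qceil (n l : ℕ) : ℤ := ⌈(n : ℚ) / l - (l : ℚ) / 2 + 1 / 2⌉

/-- Number of exceeding grains: `k = n - l(2p+1-l)/2`. -/
def kval (n l : ℕ) : ℤ := (n : ℤ) - (l : ℤ) * (2 * pfloor n l + 1 - l) / 2

/-!
With `x = n/l + (l-1)/2` we have `p = ⌊x⌋` and `q = ⌈x⌉ - (l-1)`. Since `l(2p+1-l)` is always
even, the division in `k` is exact and `k = l·(x - ⌊x⌋)`. So `k = 0` exactly when `x` is an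
integer, where `⌈x⌉ = p`; otherwise `⌈x⌉ = p + 1`.
-/

lemma Int.ceil_eq_floor_of_fract_eq_zero {R : Type*} [Ring R] [LinearOrder R]
    [IsStrictOrderedRing R] [FloorRing R] {x : R} (h : Int.fract x = 0) : ⌈x⌉ = ⌊x⌋ := by
  rw [← Int.floor_add_fract x, h, add_zero, Int.ceil_intCast, Int.floor_intCast]

lemma Int.even_mul_two_mul_add_one_sub (l p : ℤ) : Even (l * (2 * p + 1 - l)) := by
  rw [Int.even_mul, Int.even_sub, Int.even_add_one]
  simp only [even_two, Even.mul_right, not_true_eq_false, false_iff]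
  exact em _

def leftHeight (n l : ℕ) : ℚ := (n : ℚ) / l + (l : ℚ) / 2 - 1 / 2

lemma pfloor_eq_floor (n l : ℕ) : pfloor n l = ⌊leftHeight n l⌋ := rfl

lemma qceil_eq_ceil_sub (n l : ℕ) : qceil n l = ⌈leftHeight n l⌉ - (l - 1) := by
  rw [qceil, ← Int.ceil_sub_intCast, leftHeight]
  congr 1
  push_cast
  ring

lemma two_mul_kval (n l : ℕ) : 2 * kval n l = 2 * n - l * (2 * pfloor n l + 1 - l) := by
  rw [kval, mul_sub, Int.mul_ediv_cancel' (Int.even_mul_two_mul_add_one_sub _ _).two_dvd]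

lemma kval_eq_mul_fract {n l : ℕ} (hl : l ≠ 0) :
    (kval n l : ℚ) = l * Int.fract (leftHeight n l) := by
  have h := congrArg (fun z : ℤ => (z : ℚ)) (two_mul_kval n l)
  push_cast at h
  rw [Int.fract, ← pfloor_eq_floor, leftHeight]
  field_simp
  linarith

lemma kval_eq_zero_iff {n l : ℕ} (hl : l ≠ 0) :
    kval n l = 0 ↔ Int.fract (leftHeight n l) = 0 := by
  rw [← Int.cast_eq_zero (α := ℚ), kval_eq_mul_fract hl, mul_eq_zero,
    or_iff_right (Nat.cast_ne_zero.2 hl)]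

/-- The heights of the leftmost and rightmost columns of the staircase fixed point:
`q = p - l + 1` if `k = 0` and `q = p - l + 2` if `k > 0`. -/
theorem staircase_left_right_heights (n l : ℕ) (hl : 1 ≤ l) :
    (kval n l = 0 → qceil n l = pfloor n l - l + 1) ∧
      (0 < kval n l → qceil n l = pfloor n l - l + 2) := by
  have hk := kval_eq_zero_iff (n := n) (Nat.one_le_iff_ne_zero.1 hl)
  rw [qceil_eq_ceil_sub, pfloor_eq_floor]
  refine ⟨fun hk0 => ?_, fun hkpos => ?_⟩
  · rw [Int.ceil_eq_floor_of_fract_eq_zero (hk.1 hk0)]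
    ring
  · have hx : leftHeight n l ∉ Set.range Int.cast := Int.fract_ne_zero_iff.1 (hk.not.1 hkpos.ne')
    rw [(Int.ceil_eq_floor_add_one_iff_notMem _).2 hx]
    ring
end

section
/- The length of the fixed point reached from the initial configuration (n) under SPM equals p if k = 0 and p + 1 if k > 0, where (p, k) is the integer-sum decomposition of n; equivalently, the length is ⌈(√(8n+1) - 1)/2⌉ for n ≥ 1. -/
/-- The SPM fixed point `Π` of the configuration `(n)`, where `n = k + p(p+1)/2`,
`0 ≤ k ≤ p`. -/
def PiConf (p k : ℕ) : ℕ → ℕ :=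
  fun i => if k = 0 then p - i else if i ≤ p - k then p - i else p + 1 - i

/-- The length (number of nonzero columns) of the SPM fixed point reached from `(n)` is `p`
if `k = 0` and `p+1` if `k > 0`; equivalently it is `⌈(√(8n+1) - 1)/2⌉` for `n ≥ 1`. -/
theorem spm_fixed_point_length (n p k : ℕ) (hk : k ≤ p)
    (hn : n = k + p * (p + 1) / 2) :
    (∀ i < (if k = 0 then p else p + 1), 0 < PiConf p k i) ∧
      (∀ i, (if k = 0 then p else p + 1) ≤ i → PiConf p k i = 0) ∧
      (1 ≤ n →
        ((if k = 0 then p else p + 1 : ℕ) : ℤ)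
          = ⌈(Real.sqrt (8 * (n : ℝ) + 1) - 1) / 2⌉) := by
  have hmod : p * (p + 1) % 2 = 0 := Nat.even_iff.mp (Nat.even_mul_succ_self p)
  have h2n : 2 * n = 2 * k + p * (p + 1) := by omega
  refine ⟨?_, ?_, ?_⟩
  · intro i hi
    unfold PiConf
    split_ifs at * <;> omega
  · intro i hi
    unfold PiConf
    split_ifs at * <;> omega
  · intro hn1
    have hcast : 8 * (n : ℝ) + 1 = 8 * (k : ℝ) + (2 * p + 1) ^ 2 := by
      have : (2 * n : ℕ) = (2 * k + p * (p + 1) : ℕ) := h2n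
      have h' : 2 * (n : ℝ) = 2 * k + p * (p + 1) := by exact_mod_cast this
      nlinarith [h']
    by_cases hk0 : k = 0
    · subst hk0
      simp only [if_pos rfl]
      rw [hcast]
      norm_num
      rw [Real.sqrt_sq (by positivity)]
      rw [show ((2 * (p : ℝ) + 1) - 1) / 2 = (p : ℝ) by ring]
      rw [Int.ceil_natCast]
    · simp only [if_neg hk0]
      have hk1 : 1 ≤ k := Nat.one_le_iff_ne_zero.mpr hk0
      rw [eq_comm, Int.ceil_eq_iff]
      constructor
      · push_cast
        have : (2 * (p : ℝ) + 1) < Real.sqrt (8 * n + 1) := by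
          rw [hcast]
          rw [show (8 * (k : ℝ) + (2 * p + 1) ^ 2) = ((2 * p + 1) ^ 2 + 8 * k) by ring]
          have := Real.lt_sqrt (x := (2 * (p:ℝ) + 1)) (y := (2 * (p:ℝ) + 1) ^ 2 + 8 * k)
            (by positivity)
          rw [this]
          have : (1:ℝ) ≤ k := by exact_mod_cast hk1
          nlinarith
        linarith
      · push_cast
        have : Real.sqrt (8 * n + 1) ≤ 2 * (p : ℝ) + 3 := by
          rw [hcast]
          rw [show (2 * (p:ℝ) + 3) = Real.sqrt ((2 * (p:ℝ) + 3) ^ 2) from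
            (Real.sqrt_sq (by positivity)).symm]
          apply Real.sqrt_le_sqrt
          have : (k : ℝ) ≤ p := by exact_mod_cast hk
          nlinarith
        linarith
end

section
/- Sequential transient length for SPM from (n): the number of sequential rule applications needed to go from (n) to the fixed point equals t_seq = (1/6)(p+1)p(p-1) + (1/2)k(2p+1-k), where (p,k) is the integer-sum decomposition of n. Equivalently, t_seq = ∑ over all grains in the fixed point of (column index − 1): t_seq = ∑_{i=1}^{L} (i-1)·Π_i where Π is the fixed point configuration and L its length. -/
/-!
Each application of the rule moves one grain one column to the right, so it raises the moment
`∑ j, j * a j` of a configuration by exactly one. The start `(n)` has moment `0`, hence the number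
of steps to `Π` is the moment of `Π`. Raising `k` by one adds a single grain to `Π`, in column
`p - k`, which turns the moment `p(p+1)(p-1)/6` of the staircase `Π = (p, …, 1)` into the closed form.
-/

/-- The SPM rule applied at column `i` (0-indexed). -/
def SPMStep (i : ℕ) (a a' : ℕ → ℕ) : Prop :=
  a (i + 1) + 2 ≤ a i ∧ a' i = a i - 1 ∧ a' (i + 1) = a (i + 1) + 1 ∧
    ∀ j, j ≠ i → j ≠ i + 1 → a' j = a j

open Finset

namespace SPMStep

variable {i : ℕ} {a a' : ℕ → ℕ}

lemma le_of_forall_lt_eq_zero (h : SPMStep i a a') {m : ℕ} (hm : ∀ j, m < j → a j = 0) :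
    i ≤ m := by
  by_contra! hi
  have := hm i hi
  have := h.1
  omega

lemma forall_lt_eq_zero (h : SPMStep i a a') {m : ℕ} (hm : ∀ j, m < j → a j = 0) :
    ∀ j, m + 1 < j → a' j = 0 := by
  intro j hj
  have hi := h.le_of_forall_lt_eq_zero hm
  rw [h.2.2.2 j (by omega) (by omega)]
  exact hm j (by omega)

lemma sum_range_mul_eq_add_one (h : SPMStep i a a') {N : ℕ} (hN : i + 1 < N) :
    ∑ j ∈ range N, j * a' j = ∑ j ∈ range N, j * a j + 1 := by
  obtain ⟨hslope, hi, hi1, hother⟩ := h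
  have hmove : ∀ j ∈ range N, j * a' j + (if j = i then j else 0) =
      j * a j + (if j = i + 1 then j else 0) := by
    intro j _
    rcases eq_or_ne j i with rfl | hji
    · obtain ⟨d, hd⟩ : ∃ d, a j = d + 1 := ⟨a j - 1, by omega⟩
      simp only [hi, hd, if_true, if_neg (Nat.succ_ne_self j).symm, Nat.add_sub_cancel]
      ring
    rcases eq_or_ne j (i + 1) with rfl | hji1
    · rw [hi1, if_neg hji, if_pos rfl]
      ring
    · rw [hother j hji hji1, if_neg hji, if_neg hji1]
  have hsum := sum_congr rfl hmove
  rw [sum_add_distrib, sum_add_distrib, sum_ite_eq', sum_ite_eq',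
    if_pos (mem_range.2 (by omega)), if_pos (mem_range.2 hN)] at hsum
  omega

end SPMStep

lemma sum_range_mul_of_spmSteps {c : ℕ → ℕ → ℕ} {m T N : ℕ}
    (h0 : ∀ j, m < j → c 0 j = 0) (hstep : ∀ t < T, ∃ i, SPMStep i (c t) (c (t + 1)))
    (hN : m + T < N) :
    ∀ t ≤ T, (∀ j, m + t < j → c t j = 0) ∧
      ∑ j ∈ range N, j * c t j = ∑ j ∈ range N, j * c 0 j + t := by
  intro t
  induction t with
  | zero => exact fun _ => ⟨h0, rfl⟩
  | succ t ih =>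
    intro ht
    obtain ⟨hsupp, hsum⟩ := ih (by omega)
    obtain ⟨i, hi⟩ := hstep t (by omega)
    have hile := hi.le_of_forall_lt_eq_zero hsupp
    refine ⟨hi.forall_lt_eq_zero hsupp, ?_⟩
    rw [hi.sum_range_mul_eq_add_one (by omega), hsum, add_assoc]

namespace PiConf

lemma apply_eq_zero {p j : ℕ} (k : ℕ) (h : p < j) : PiConf p k j = 0 := by
  unfold PiConf
  split_ifs <;> omega

lemma zero_apply (p i : ℕ) : PiConf p 0 i = p - i := rfl

lemma succ_apply {p k : ℕ} (h : k < p) (i : ℕ) :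
    PiConf p (k + 1) i = PiConf p k i + if i = p - k then 1 else 0 := by
  unfold PiConf
  split_ifs <;> first | contradiction | omega

lemma sum_range_mul_eq {p N : ℕ} (k : ℕ) (hN : p < N) :
    ∑ i ∈ range N, i * PiConf p k i = ∑ i ∈ range (p + 1), i * PiConf p k i := by
  refine (sum_subset (range_subset_range.2 hN) fun j _ hj => ?_).symm
  rw [apply_eq_zero k (by simpa using hj), mul_zero]

end PiConf

lemma six_mul_sum_range_mul_sub (p : ℕ) :
    6 * ∑ i ∈ range (p + 1), i * (p - i) = (p + 1) * p * (p - 1) := by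
  induction p with
  | zero => simp
  | succ p ih =>
    have hsplit : ∀ i ∈ range (p + 1), i * (p + 1 - i) = i * (p - i) + i := by
      intro i hi
      rw [mem_range] at hi
      rw [show p + 1 - i = p - i + 1 by omega]
      ring
    have hgauss := sum_range_id_mul_two (p + 1)
    rw [sum_range_succ, Nat.sub_self, mul_zero, add_zero, sum_congr rfl hsplit, sum_add_distrib,
      mul_add, ih]
    rw [Nat.add_sub_cancel] at hgauss ⊢
    rcases p with _ | p
    · simp
    · rw [Nat.add_sub_cancel] at ih ⊢
      nlinarith [hgauss]

lemma six_mul_sum_range_mul_PiConf {p k : ℕ} (hk : k ≤ p) :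
    6 * ∑ i ∈ range (p + 1), i * PiConf p k i =
      (p + 1) * p * (p - 1) + 3 * (k * (2 * p + 1 - k)) := by
  induction k with
  | zero => simpa [PiConf.zero_apply] using six_mul_sum_range_mul_sub p
  | succ k ih =>
    have hadd : ∀ i ∈ range (p + 1), i * PiConf p (k + 1) i =
        i * PiConf p k i + if i = p - k then i else 0 := by
      intro i _
      rw [PiConf.succ_apply (by omega), mul_add, mul_ite, mul_one, mul_zero]
    rw [sum_congr rfl hadd, sum_add_distrib, sum_ite_eq', if_pos (mem_range.2 (by omega)),
      mul_add, ih (by omega)]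
    obtain ⟨d, rfl⟩ : ∃ d, p = k + 1 + d := ⟨p - k - 1, by omega⟩
    rw [show 2 * (k + 1 + d) + 1 - k = k + 2 * d + 3 by omega,
      show 2 * (k + 1 + d) + 1 - (k + 1) = k + 2 * d + 2 by omega,
      show k + 1 + d - k = d + 1 by omega]
    ring

theorem spm_sequential_transient_length_general (n p k T : ℕ) (c : ℕ → ℕ → ℕ)
    (hk : k ≤ p)
    (h0 : c 0 = fun j => if j = 0 then n else 0)
    (hstep : ∀ t < T, ∃ i, SPMStep i (c t) (c (t + 1)))
    (hT : c T = PiConf p k) :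
    6 * T = (p + 1) * p * (p - 1) + 3 * (k * (2 * p + 1 - k)) ∧
      T = ∑ i ∈ Finset.range (p + 1), i * PiConf p k i := by
  have hsupp0 : ∀ j, 0 < j → c 0 j = 0 := fun j hj => by simp [h0, hj.ne']
  have hmoment0 : ∑ j ∈ range (T + p + 1), j * c 0 j = 0 :=
    sum_eq_zero fun j _ => by rcases eq_or_ne j 0 with rfl | hj <;> simp [*]
  obtain ⟨-, hmoment⟩ :=
    sum_range_mul_of_spmSteps hsupp0 hstep (N := T + p + 1) (by omega) T le_rfl
  rw [hT, hmoment0, zero_add, PiConf.sum_range_mul_eq k (by omega)] at hmoment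
  exact ⟨hmoment ▸ six_mul_sum_range_mul_PiConf hk, hmoment.symm⟩

/-- Sequential transient length for SPM from `(n)`: any sequence of sequential rule
applications from `(n)` to the fixed point `Π` has length
`t_seq = (1/6)(p+1)p(p-1) + (1/2)k(2p+1-k) = ∑_i (i-1)·Π_i`. -/
theorem spm_sequential_transient_length (n p k T : ℕ) (c : ℕ → ℕ → ℕ)
    (hk : k ≤ p) (hn : n = k + p * (p + 1) / 2)
    (h0 : c 0 = fun j => if j = 0 then n else 0)
    (hstep : ∀ t < T, ∃ i, SPMStep i (c t) (c (t + 1)))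
    (hT : c T = PiConf p k) :
    6 * T = (p + 1) * p * (p - 1) + 3 * (k * (2 * p + 1 - k)) ∧
      T = ∑ i ∈ Finset.range (p + 1), i * PiConf p k i :=
  spm_sequential_transient_length_general n p k T c hk h0 hstep hT
end

section
/- Any application of the SPM rule to a decreasing configuration c where between any two plateaus there is at least a cliff, at any column, yields a configuration of length at most one greater; and conversely, along any SPM evolution, the length of the configuration (number of nonzero columns) never decreases. -/
namespace SPMStep

variable {i : ℕ} {a a' : ℕ → ℕ}

theorem apply_of_ne (h : SPMStep i a a') {j : ℕ} (hi : j ≠ i) (hi' : j ≠ i + 1) : a' j = a j :=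
  h.2.2.2 j hi hi'

/-- The rule only fires at a column holding at least two grains. -/
theorem lt_of_forall_le_eq_zero (h : SPMStep i a a') {l : ℕ} (hl : ∀ j, l ≤ j → a j = 0) :
    i < l := by
  by_contra! hli
  have := hl i hli
  have := h.1
  omega

theorem apply_eq_zero_of_succ_le (h : SPMStep i a a') {l : ℕ} (hl : ∀ j, l ≤ j → a j = 0)
    {j : ℕ} (hj : l + 1 ≤ j) : a' j = 0 := by
  have hil := h.lt_of_forall_le_eq_zero hl
  rw [h.apply_of_ne (by omega) (by omega)]
  exact hl j (by omega)

/-- Column `i` keeps at least `a (i + 1) + 1` grains, every other column does not lose any. -/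
theorem pos_of_pos (h : SPMStep i a a') {j : ℕ} (hj : 0 < a j) : 0 < a' j := by
  obtain ⟨hcliff, hi, hi', hrest⟩ := h
  by_cases hji : j = i
  · subst hji; omega
  by_cases hji' : j = i + 1
  · subst hji'; omega
  rwa [hrest j hji hji']

end SPMStep

/-- An application of the SPM rule to a configuration of length at most `l` yields a
configuration of length at most `l + 1`; moreover no nonzero column ever becomes zero, so
along any SPM evolution the length never decreases. -/
theorem spm_length_monotone (a a' : ℕ → ℕ) (i l : ℕ)
    (h : SPMStep i a a') (hl : ∀ j, l ≤ j → a j = 0) :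
    (∀ j, l + 1 ≤ j → a' j = 0) ∧ (∀ j, 0 < a j → 0 < a' j) :=
  ⟨fun _ hj => h.apply_eq_zero_of_succ_le hl hj, fun _ hj => h.pos_of_pos hj⟩
end

section
/- Transient length within an interval: the number of sequential SPM steps to evolve a configuration (a_1, ..., a_l) confined to an interval of length l into its staircase fixed point with parameters (p, k) equals t = l(l-1)(3p-2l+1)/6 + k(2l-k-1)/2 − t⁰, where t⁰ = ∑_{i=0}^{l-1} i·a_{i+1}. Equivalently, the 'movement weight' W(c) = ∑_{i=1}^{l} (i-1)·a_i increases by exactly 1 per SPM step, and the movement weight of the staircase fixed point equals ∑_{i=0}^{l-1} i(p-i) + ∑_{i=l-k}^{l-1} i = l(l-1)(3p-2l+1)/6 + k(2l-k-1)/2. -/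
/-- The staircase fixed point of SPM confined to an interval of length `l`, with leftmost
height `p` and `k` exceeding grains placed on the last `k` columns (0-indexed):
`(p, p-1, ..., p-α, p-α, ..., p-l+2)` with `α = l-k-1` if `k > 0`, and
`(p, p-1, ..., p-l+1)` if `k = 0`. -/
def StairFix (l p k : ℕ) : ℕ → ℕ :=
  fun i => if i < l then (if i + k + 1 ≤ l then p - i else p - i + 1) else 0

lemma spm_step_weight {l i : ℕ} {b b' : ℕ → ℕ} (hil : i + 1 < l) (h : SPMStep i b b') :
    ∑ j ∈ Finset.range l, (j : ℤ) * b' j = (∑ j ∈ Finset.range l, (j : ℤ) * b j) + 1 := by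
  obtain ⟨hle, hi, hi1, hoth⟩ := h
  have hbi : 1 ≤ b i := by omega
  have hcast : (b' i : ℤ) = (b i : ℤ) - 1 := by
    rw [hi]; push_cast [hbi]; ring
  have hpt : ∀ j ∈ Finset.range l,
      (j : ℤ) * b' j
        = (j : ℤ) * b j + ((if j = i then -(i:ℤ) else 0) + (if j = i + 1 then (i:ℤ) + 1 else 0)) := by
    intro j _
    by_cases h1 : j = i
    · subst h1
      rw [hcast, if_pos rfl, if_neg (by omega : ¬ j = j + 1)]
      ring
    · by_cases h2 : j = i + 1
      · subst h2
        rw [hi1, if_neg h1, if_pos rfl]; push_cast; ring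
      · rw [hoth j h1 h2]; simp [h1, h2]
  rw [Finset.sum_congr rfl hpt, Finset.sum_add_distrib, Finset.sum_add_distrib,
    Finset.sum_ite_eq', Finset.sum_ite_eq']
  have h1 : i ∈ Finset.range l := Finset.mem_range.2 (by omega)
  have h2 : i + 1 ∈ Finset.range l := Finset.mem_range.2 hil
  rw [if_pos h1, if_pos h2]; push_cast; ring

lemma spm_sumA (p n : ℕ) :
    6 * ∑ i ∈ Finset.range n, (i:ℤ) * ((p:ℤ) - i)
      = (n:ℤ) * ((n:ℤ) - 1) * (3 * (p:ℤ) - 2 * n + 1) := by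
  induction n with
  | zero => simp
  | succ m ih =>
    rw [Finset.sum_range_succ, mul_add, ih]; push_cast; ring

lemma spm_sumB (n : ℕ) : 2 * ∑ i ∈ Finset.range n, (i:ℤ) = (n:ℤ) * ((n:ℤ) - 1) := by
  induction n with
  | zero => simp
  | succ m ih =>
    rw [Finset.sum_range_succ, mul_add, ih]; push_cast; ring

lemma spm_stair_weight (l p k : ℕ) (hl : 1 ≤ l) (hlp : l ≤ p + 1) (hk : k < l) :
    6 * ∑ i ∈ Finset.range l, (i : ℤ) * StairFix l p k i
        = (l : ℤ) * ((l : ℤ) - 1) * (3 * (p : ℤ) - 2 * l + 1)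
            + 3 * (k : ℤ) * (2 * (l : ℤ) - k - 1) := by
  have hpt : ∀ i ∈ Finset.range l,
      (i : ℤ) * StairFix l p k i
        = (i:ℤ) * ((p:ℤ) - i) + (if l ≤ i + k then (i:ℤ) else 0) := by
    intro i hi
    have hil : i < l := Finset.mem_range.1 hi
    have hip : i ≤ p := by omega
    unfold StairFix
    by_cases h : i + k + 1 ≤ l
    · rw [if_pos hil, if_pos h, if_neg (by omega : ¬ l ≤ i + k)]
      push_cast [hip]; ring
    · rw [if_pos hil, if_neg h, if_pos (by omega : l ≤ i + k)]
      push_cast [hip]; ring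
  rw [Finset.sum_congr rfl hpt, Finset.sum_add_distrib]
  have hite : ∑ i ∈ Finset.range l, (if l ≤ i + k then (i:ℤ) else 0)
      = ∑ i ∈ Finset.Ico (l - k) l, (i:ℤ) := by
    rw [← Finset.sum_filter]
    congr 1
    ext x
    simp only [Finset.mem_filter, Finset.mem_range, Finset.mem_Ico]
    omega
  rw [hite, Finset.sum_Ico_eq_sub _ (by omega : l - k ≤ l)]
  have hA := spm_sumA p l
  have hB1 := spm_sumB l
  have hB2 := spm_sumB (l - k)
  have hc : ((l - k : ℕ) : ℤ) = (l:ℤ) - k := by push_cast [hk.le]; ring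
  rw [hc] at hB2
  linear_combination hA + 3 * hB1 - 3 * hB2

/-- Transient length within an interval: the number of sequential SPM steps needed to evolve
a configuration `a` confined to an interval of length `l` into the staircase fixed point with
parameters `(p, k)` is `t = l(l-1)(3p-2l+1)/6 + k(2l-k-1)/2 - t⁰`, where
`t⁰ = ∑_{i=0}^{l-1} i·a_{i+1}` is the movement weight of `a`; the movement weight of the
staircase fixed point itself equals `l(l-1)(3p-2l+1)/6 + k(2l-k-1)/2`. -/
theorem spm_interval_transient_length (l p k T : ℕ) (a : ℕ → ℕ) (c : ℕ → ℕ → ℕ)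
    (hl : 1 ≤ l) (hlp : l ≤ p + 1) (hk : k < l)
    (h0 : c 0 = a)
    (hstep : ∀ t < T, ∃ i, i + 1 < l ∧ SPMStep i (c t) (c (t + 1)))
    (hT : c T = StairFix l p k) :
    6 * ((T : ℤ) + ∑ i ∈ Finset.range l, (i : ℤ) * a i)
        = (l : ℤ) * ((l : ℤ) - 1) * (3 * (p : ℤ) - 2 * l + 1)
            + 3 * (k : ℤ) * (2 * (l : ℤ) - k - 1) ∧
      6 * ∑ i ∈ Finset.range l, (i : ℤ) * StairFix l p k i
        = (l : ℤ) * ((l : ℤ) - 1) * (3 * (p : ℤ) - 2 * l + 1)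
            + 3 * (k : ℤ) * (2 * (l : ℤ) - k - 1) := by
  have hstair := spm_stair_weight l p k hl hlp hk
  refine ⟨?_, hstair⟩
  have hW : ∀ t, t ≤ T →
      (∑ j ∈ Finset.range l, (j:ℤ) * c t j)
        = (∑ j ∈ Finset.range l, (j:ℤ) * a j) + t := by
    intro t
    induction t with
    | zero => intro _; simp [h0]
    | succ n ih =>
      intro h
      obtain ⟨i, hil, hstepi⟩ := hstep n (by omega)
      rw [spm_step_weight hil hstepi, ih (by omega)]
      push_cast; ring
  have hWT := hW T le_rfl
  rw [hT] at hWT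
  rw [hWT] at hstair
  linarith
end

section
/- If a configuration c of length at most l is decreasing and between any two plateaus there is at least a cliff, then every configuration on any SPM path from (n) down to c (where n is the number of grains of c) also has length at most l. In particular, c is reachable from (n) using only rule applications at columns with index less than l. -/
namespace SPMAux

/-- reverse move at `i`: move one grain from column `i+1` to column `i`. -/
def rev (c : ℕ → ℕ) (i : ℕ) : ℕ → ℕ :=
  fun j => if j = i then c i + 1 else if j = i + 1 then c (i + 1) - 1 else c j

lemma rev_at (c : ℕ → ℕ) (i : ℕ) : rev c i i = c i + 1 := by simp [rev]

lemma rev_at1 (c : ℕ → ℕ) (i : ℕ) : rev c i (i + 1) = c (i + 1) - 1 := by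
  simp [rev]

lemma rev_ne (c : ℕ → ℕ) (i j : ℕ) (h1 : j ≠ i) (h2 : j ≠ i + 1) : rev c i j = c j := by
  simp [rev, h1, h2]

lemma rev_spm (c : ℕ → ℕ) (i : ℕ) (h1 : 0 < c (i + 1)) (h2 : c (i + 1) ≤ c i) :
    SPMStep i (rev c i) c := by
  refine ⟨?_, ?_, ?_, fun j hj hj' => (rev_ne c i j hj hj').symm⟩
  · rw [rev_at, rev_at1]; omega
  · rw [rev_at]; omega
  · rw [rev_at1]; omega

lemma rev_sum (c : ℕ → ℕ) (i l : ℕ) (h1 : 0 < c (i + 1)) (hl : i + 1 < l) :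
    ∑ j ∈ Finset.range l, rev c i j = ∑ j ∈ Finset.range l, c j := by
  have key : ∀ j ∈ Finset.range l,
      rev c i j + (if j = i + 1 then 1 else 0) = c j + (if j = i then 1 else 0) := by
    intro j _
    rcases eq_or_ne j i with rfl | hji
    · rw [rev_at, if_neg (by omega : ¬(j = j + 1)), if_pos rfl]
    · rcases eq_or_ne j (i + 1) with rfl | hji1
      · rw [rev_at1, if_pos rfl, if_neg hji]
        omega
      · rw [rev_ne c i j hji hji1, if_neg hji1, if_neg hji]
  have hs := Finset.sum_congr rfl key
  rw [Finset.sum_add_distrib, Finset.sum_add_distrib,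
    Finset.sum_ite_eq' (Finset.range l) (i + 1) (fun _ => 1),
    Finset.sum_ite_eq' (Finset.range l) i (fun _ => 1),
    if_pos (Finset.mem_range.mpr hl), if_pos (Finset.mem_range.mpr (by omega))] at hs
  omega

lemma rev_weight (c : ℕ → ℕ) (i l : ℕ) (h1 : 0 < c (i + 1)) (hl : i + 1 < l) :
    (∑ j ∈ Finset.range l, j * rev c i j) + 1 = ∑ j ∈ Finset.range l, j * c j := by
  have key : ∀ j ∈ Finset.range l,
      j * rev c i j + (if j = i + 1 then i + 1 else 0)
        = j * c j + (if j = i then i else 0) := by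
    intro j _
    rcases eq_or_ne j i with rfl | hji
    · rw [rev_at, if_neg (by omega : ¬(j = j + 1)), if_pos rfl, Nat.mul_add]
      omega
    · rcases eq_or_ne j (i + 1) with rfl | hji1
      · rw [rev_at1, if_pos rfl, if_neg hji]
        obtain ⟨y, hy⟩ := Nat.exists_eq_add_of_le h1
        rw [hy]
        simp [Nat.mul_add]
        ring
      · rw [rev_ne c i j hji hji1, if_neg hji1, if_neg hji]
  have hs := Finset.sum_congr rfl key
  rw [Finset.sum_add_distrib, Finset.sum_add_distrib,
    Finset.sum_ite_eq' (Finset.range l) (i + 1) (fun _ => i + 1),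
    Finset.sum_ite_eq' (Finset.range l) i (fun _ => i),
    if_pos (Finset.mem_range.mpr hl), if_pos (Finset.mem_range.mpr (by omega))] at hs
  omega

/-- Key step lemma: if `c` is good and not concentrated on column 0, there is a reverse
move producing a good predecessor. -/
lemma exists_rev (c : ℕ → ℕ) (l : ℕ)
    (hl0 : ∀ j, l ≤ j → c j = 0)
    (hdec : ∀ j, c (j + 1) ≤ c j)
    (hplat : ∀ i j, i < j → c i = c (i + 1) → 0 < c (i + 1) →
      c j = c (j + 1) → 0 < c (j + 1) →
      ∃ m, i < m ∧ m < j ∧ c (m + 1) + 2 ≤ c m)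
    (hc1 : 0 < c 1) :
    ∃ i, i + 1 < l ∧ 0 < c (i + 1) ∧ c (i + 1) ≤ c i ∧
      (∀ j, l ≤ j → rev c i j = 0) ∧
      (∀ j, rev c i (j + 1) ≤ rev c i j) ∧
      (∀ i0 j0, i0 < j0 → rev c i i0 = rev c i (i0 + 1) → 0 < rev c i (i0 + 1) →
        rev c i j0 = rev c i (j0 + 1) → 0 < rev c i (j0 + 1) →
        ∃ m, i0 < m ∧ m < j0 ∧ rev c i (m + 1) + 2 ≤ rev c i m) := by
  classical
  by_cases hp : ∃ p, c (p + 1) = c p ∧ 0 < c (p + 1)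
  · -- plateau case: take the first plateau p and do the reverse move at p
    obtain ⟨p, ⟨hv, hv0⟩, hmin⟩ :
        ∃ p, (c (p + 1) = c p ∧ 0 < c (p + 1)) ∧
          ∀ q, q < p → ¬(c (q + 1) = c q ∧ 0 < c (q + 1)) :=
      ⟨Nat.find hp, Nat.find_spec hp, fun q hq => Nat.find_min hp hq⟩
    have hpl : p + 1 < l := by
      by_contra h
      push_neg at h
      exact absurd (hl0 (p + 1) h) (by omega)
    have F1 : ∀ q, q + 1 = p → c p + 1 ≤ c q := by
      intro q hq
      have h1 : c (q + 1) ≤ c q := hdec q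
      have h2 := hmin q (by omega)
      have hq1 : c (q + 1) = c p := by rw [hq]
      omega
    have F2 : c (p + 2) < c (p + 1) := by
      have h1 : c (p + 1 + 1) ≤ c (p + 1) := hdec (p + 1)
      have e : p + 1 + 1 = p + 2 := by omega
      rw [e] at h1
      rcases eq_or_lt_of_le h1 with he | h
      · exfalso
        obtain ⟨m, hm1, hm2, _⟩ := hplat p (p + 1) (by omega) hv.symm hv0
          (by rw [e]; exact he.symm) (by rw [e]; omega)
        omega
      · exact h
    refine ⟨p, hpl, hv0, le_of_eq hv, ?_, ?_, ?_⟩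
    · intro j hj
      rw [rev_ne c p j (by omega) (by omega)]
      exact hl0 j hj
    · intro j
      rcases eq_or_ne (j + 1) p with h | h
      · rw [h, rev_at, rev_ne c p j (by omega) (by omega)]
        exact F1 j h
      · rcases eq_or_ne j p with rfl | h2
        · rw [rev_at, rev_at1]
          omega
        · rcases eq_or_ne j (p + 1) with rfl | h3
          · rw [rev_at1, rev_ne c p (p + 1 + 1) (by omega) (by omega)]
            rw [show p + 1 + 1 = p + 2 from by omega]
            omega
          · rw [rev_ne c p (j + 1) (by omega) (by omega), rev_ne c p j h2 h3]
            exact hdec j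
    · intro i0 j0 hij hi0 hi0pos hj0 hj0pos
      have hcliff : rev c p (p + 1) + 2 ≤ rev c p p := by
        rw [rev_at, rev_at1]; omega
      have hi0np : i0 ≠ p := by
        intro h; subst h
        rw [rev_at, rev_at1] at hi0
        omega
      have hj0np : j0 ≠ p := by
        intro h; subst h
        rw [rev_at, rev_at1] at hj0
        omega
      rcases lt_trichotomy j0 p with hlt | heq | hgt
      · exfalso
        have h1 : rev c p i0 = c i0 := rev_ne _ _ _ (by omega) (by omega)
        have h2 : rev c p (i0 + 1) = c (i0 + 1) := rev_ne _ _ _ (by omega) (by omega)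
        refine hmin i0 (by omega) ⟨?_, ?_⟩
        · rw [← h1, ← h2]; exact hi0.symm
        · rw [← h2]; exact hi0pos
      · exact absurd heq hj0np
      · rcases lt_trichotomy i0 p with hlt2 | heq2 | hgt2
        · exact ⟨p, hlt2, hgt, hcliff⟩
        · exact absurd heq2 hi0np
        · have hj1 : rev c p j0 = c j0 := rev_ne _ _ _ (by omega) (by omega)
          have hj2 : rev c p (j0 + 1) = c (j0 + 1) := rev_ne _ _ _ (by omega) (by omega)
          have hj0c : c j0 = c (j0 + 1) := by rw [← hj1, ← hj2]; exact hj0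
          have hj0cpos : 0 < c (j0 + 1) := by rw [← hj2]; exact hj0pos
          rcases eq_or_ne i0 (p + 1) with rfl | hne
          · have h2 : rev c p (p + 1 + 1) = c (p + 1 + 1) :=
              rev_ne _ _ _ (by omega) (by omega)
            rw [rev_at1, h2] at hi0
            obtain ⟨m, hm1, hm2, hm3⟩ := hplat p j0 (by omega) hv.symm hv0 hj0c hj0cpos
            have hmne : m ≠ p + 1 := by
              intro h; subst h
              omega
            refine ⟨m, by omega, hm2, ?_⟩
            rw [rev_ne _ _ _ (by omega) (by omega), rev_ne _ _ _ (by omega) (by omega)]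
            exact hm3
          · have h1 : rev c p i0 = c i0 := rev_ne _ _ _ (by omega) (by omega)
            have h2 : rev c p (i0 + 1) = c (i0 + 1) := rev_ne _ _ _ (by omega) (by omega)
            have hi0c : c i0 = c (i0 + 1) := by rw [← h1, ← h2]; exact hi0
            have hi0cpos : 0 < c (i0 + 1) := by rw [← h2]; exact hi0pos
            obtain ⟨m, hm1, hm2, hm3⟩ := hplat i0 j0 hij hi0c hi0cpos hj0c hj0cpos
            refine ⟨m, hm1, hm2, ?_⟩
            rw [rev_ne _ _ _ (by omega) (by omega), rev_ne _ _ _ (by omega) (by omega)]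
            exact hm3
  · -- no plateau: reverse move at 0
    have hnp : ∀ q : ℕ, ¬(c (q + 1) = c q ∧ 0 < c (q + 1)) := fun q h => hp ⟨q, h⟩
    have h10 : c 1 < c 0 := by
      have h01 : c 1 ≤ c 0 := hdec 0
      have h2 : ¬(c 1 = c 0 ∧ 0 < c 1) := hnp 0
      omega
    have h21 : c 2 < c 1 := by
      have h01 : c 2 ≤ c 1 := hdec 1
      have h2 : ¬(c 2 = c 1 ∧ 0 < c 2) := hnp 1
      omega
    have hl2 : (0 : ℕ) + 1 < l := by
      by_contra h
      push_neg at h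
      have := hl0 1 (by omega)
      omega
    have e0 : rev c 0 0 = c 0 + 1 := rev_at c 0
    have e1 : rev c 0 1 = c 1 - 1 := rev_at1 c 0
    refine ⟨0, hl2, hc1, hdec 0, ?_, ?_, ?_⟩
    · intro j hj
      rw [rev_ne c 0 j (by omega) (by omega)]
      exact hl0 j hj
    · intro j
      rcases eq_or_ne j 0 with rfl | hj0
      · show rev c 0 1 ≤ rev c 0 0
        rw [e0, e1]; omega
      · rcases eq_or_ne j 1 with rfl | hj1
        · show rev c 0 2 ≤ rev c 0 1
          have e2 : rev c 0 2 = c 2 := rev_ne c 0 2 (by omega) (by omega)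
          rw [e2, e1]; omega
        · have e : rev c 0 (j + 1) = c (j + 1) := rev_ne c 0 (j + 1) (by omega) (by omega)
          have e' : rev c 0 j = c j := rev_ne c 0 j hj0 (by omega)
          rw [e, e']
          exact hdec j
    · intro i0 j0 hij hi0 hi0pos hj0 hj0pos
      exfalso
      have key : ∀ m, rev c 0 m = rev c 0 (m + 1) → 0 < rev c 0 (m + 1) → m = 1 := by
        intro m hm hmpos
        rcases eq_or_ne m 0 with rfl | hm0
        · exfalso
          have hm' : c 0 + 1 = c 1 - 1 := by
            rw [← e0, ← e1]; exact hm
          omega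
        · rcases eq_or_ne m 1 with rfl | hm1
          · rfl
          · exfalso
            have e : rev c 0 m = c m := rev_ne c 0 m hm0 (by omega)
            have e' : rev c 0 (m + 1) = c (m + 1) := rev_ne c 0 (m + 1) (by omega) (by omega)
            refine hnp m ⟨?_, ?_⟩
            · rw [← e, ← e']; exact hm.symm
            · rw [← e']; exact hmpos
      have k1 := key i0 hi0 hi0pos
      have k2 := key j0 hj0 hj0pos
      omega

lemma reach_base (l : ℕ) (c : ℕ → ℕ) (hl0 : ∀ j, l ≤ j → c j = 0)
    (hdec : ∀ j, c (j + 1) ≤ c j) (hc1 : c 1 = 0) :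
    c = (fun j => if j = 0 then (∑ j ∈ Finset.range l, c j) else 0) := by
  have hz : ∀ j, 1 ≤ j → c j = 0 := by
    have hmono : ∀ k, c (1 + k) ≤ c 1 := by
      intro k
      induction k with
      | zero => exact le_refl _
      | succ k ih => exact le_trans (hdec (1 + k)) ih
    intro j hj
    have := hmono (j - 1)
    rw [show 1 + (j - 1) = j from by omega] at this
    omega
  funext j
  rcases eq_or_ne j 0 with rfl | hj
  · simp only [if_pos rfl]
    rcases Nat.eq_zero_or_pos l with rfl | hl
    · rw [Finset.range_zero, Finset.sum_empty]
      exact hl0 0 (le_refl 0)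
    · exact (Finset.sum_eq_single_of_mem 0 (Finset.mem_range.mpr hl)
        (fun b _ hb => hz b (by omega))).symm
  · rw [if_neg hj]
    exact hz j (by omega)

lemma reach (l : ℕ) : ∀ (w : ℕ) (c : ℕ → ℕ),
    (∀ j, l ≤ j → c j = 0) →
    (∀ j, c (j + 1) ≤ c j) →
    (∀ i j, i < j → c i = c (i + 1) → 0 < c (i + 1) →
      c j = c (j + 1) → 0 < c (j + 1) →
      ∃ m, i < m ∧ m < j ∧ c (m + 1) + 2 ≤ c m) →
    (∑ j ∈ Finset.range l, j * c j = w) →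
    ∃ (T : ℕ) (cs : ℕ → ℕ → ℕ),
      cs 0 = (fun j => if j = 0 then (∑ j ∈ Finset.range l, c j) else 0) ∧ cs T = c ∧
      ∀ t < T, ∃ i, i + 1 < l ∧ SPMStep i (cs t) (cs (t + 1)) := by
  intro w
  induction w using Nat.strong_induction_on with
  | _ w ih =>
    intro c hl0 hdec hplat hw
    by_cases hc1 : c 1 = 0
    · refine ⟨0, fun _ => c, ?_, rfl, fun t ht => absurd ht (Nat.not_lt_zero t)⟩
      exact reach_base l c hl0 hdec hc1
    · replace hc1 : 0 < c 1 := Nat.pos_of_ne_zero hc1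
      obtain ⟨i, hil, hpos, hle, hl0', hdec', hplat'⟩ := exists_rev c l hl0 hdec hplat hc1
      have hw' : (∑ j ∈ Finset.range l, j * rev c i j) + 1 = w := by
        rw [rev_weight c i l hpos hil]
        exact hw
      obtain ⟨T, cs, hcs0, hcsT, hsteps⟩ :=
        ih (w - 1) (by omega) (rev c i) hl0' hdec' hplat' (by omega)
      have hsum := rev_sum c i l hpos hil
      refine ⟨T + 1, fun t => if t ≤ T then cs t else c, ?_, ?_, ?_⟩
      · show (if 0 ≤ T then cs 0 else c) = _
        rw [if_pos (Nat.zero_le T), hcs0, hsum]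
      · show (if T + 1 ≤ T then cs (T + 1) else c) = c
        rw [if_neg (by omega)]
      · intro t ht
        rcases Nat.lt_or_ge t T with h | h
        · obtain ⟨i', hi', hstep⟩ := hsteps t h
          refine ⟨i', hi', ?_⟩
          show SPMStep i' (if t ≤ T then cs t else c) (if t + 1 ≤ T then cs (t + 1) else c)
          rw [if_pos (by omega : t ≤ T), if_pos (by omega : t + 1 ≤ T)]
          exact hstep
        · have ht' : t = T := by omega
          subst ht'
          refine ⟨i, hil, ?_⟩
          show SPMStep i (if t ≤ t then cs t else c) (if t + 1 ≤ t then cs (t + 1) else c)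
          rw [if_pos (le_refl t), if_neg (by omega), hcsT]
          exact rev_spm c i hpos hle

end SPMAux

/-- If `c` has length at most `l`, is decreasing, and between any two plateaus there is a
cliff, then `c` is reachable from `(n)` (`n` its number of grains) using only rule
applications at columns of index less than `l`; moreover every configuration on any SPM path
from `(n)` to `c` has length at most `l`. -/
theorem spm_reachable_within_length (c : ℕ → ℕ) (l n : ℕ)
    (hl0 : ∀ j, l ≤ j → c j = 0)
    (hdec : ∀ j, c (j + 1) ≤ c j)
    (hplat : ∀ i j, i < j → c i = c (i + 1) → 0 < c (i + 1) →
      c j = c (j + 1) → 0 < c (j + 1) →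
      ∃ m, i < m ∧ m < j ∧ c (m + 1) + 2 ≤ c m)
    (hn : n = ∑ j ∈ Finset.range l, c j) :
    (∃ (T : ℕ) (cs : ℕ → ℕ → ℕ),
        cs 0 = (fun j => if j = 0 then n else 0) ∧ cs T = c ∧
        ∀ t < T, ∃ i, i + 1 < l ∧ SPMStep i (cs t) (cs (t + 1))) ∧
      (∀ (T : ℕ) (cs : ℕ → ℕ → ℕ),
        cs 0 = (fun j => if j = 0 then n else 0) → cs T = c →
        (∀ t < T, ∃ i, SPMStep i (cs t) (cs (t + 1))) →
        ∀ t ≤ T, ∀ j, l ≤ j → cs t j = 0) := by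
  constructor
  · obtain ⟨T, cs, h0, hT, hs⟩ :=
      SPMAux.reach l (∑ j ∈ Finset.range l, j * c j) c hl0 hdec hplat rfl
    refine ⟨T, cs, ?_, hT, hs⟩
    rw [hn]
    exact h0
  · intro T cs h0 hT hsteps
    have aux : ∀ d j, l ≤ j → cs (T - d) j = 0 := by
      intro d
      induction d with
      | zero =>
        intro j hj
        rw [Nat.sub_zero, hT]
        exact hl0 j hj
      | succ d ihd =>
        intro j hj
        rcases Nat.lt_or_ge d T with h | h
        · have ht : T - (d + 1) < T := by omega
          have ht2 : T - (d + 1) + 1 = T - d := by omega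
          obtain ⟨i, hstep⟩ := hsteps (T - (d + 1)) ht
          rw [ht2] at hstep
          obtain ⟨hcl, hi, hi1, hother⟩ := hstep
          have hi1l : i + 1 < l := by
            by_contra hh
            push_neg at hh
            have := ihd (i + 1) hh
            omega
          rw [← hother j (by omega) (by omega)]
          exact ihd j hj
        · have heq : T - (d + 1) = T - d := by omega
          rw [heq]
          exact ihd j hj
    intro t ht j hj
    have := aux (T - t) j hj
    rwa [show T - (T - t) = t from by omega] at this
end
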